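/- For every positive integer n, the matrix ring Mₙ(𝔽₂) over the field with two elements is nil-clean. -/

import Mathlib

/-- An element of a ring is nil-clean if it is the sum of an idempotent and a nilpotent. -/
def IsNilCleanRing (R : Type*) [Ring R] : Prop :=
  ∀ a : R, ∃ e n : R, IsIdempotentElem e ∧ IsNilpotent n ∧ a = e + n

/-!
Nil-cleanness of an endomorphism `f` glues along an `f`-invariant subspace `W`: idempotents of `W`
and of `V ⧸ W` lift, through a complement of `W`, to an idempotent of `V`, and an endomorphism
that is nilpotent on `W` and on `V ⧸ W` is nilpotent. By induction on the dimension it remains to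
treat a cyclic `f`, with basis `β i = fⁱ v` (`i ≤ L`). Over `𝔽₂` either `β (L+1) = 0`, and `f` is
nilpotent, or `β (L+1) = β K + (a combination of the β i with i < K)` for some `K ≤ L`. Put
`t = β K + ⋯ + β L` and let `e` send `β K` to `β K`, `β L` to `t - β (L+1)` (so for `K = L` the
rank-one `β L ↦ β (L+1)`) and the other `β i` to `0`. Then `e` is idempotent, and in characteristic
two `f - e` kills `t` while every `β i` reaches `t` along a chain `β i ↦ β (i+1)`.
-/

open Module Set Submodule

def IsNilClean {R : Type*} [Ring R] (a : R) : Prop :=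
  ∃ e : R, IsIdempotentElem e ∧ IsNilpotent (a - e)

section Ring

variable {R S : Type*} [Ring R] [Ring S] {a : R}

theorem IsNilpotent.isNilClean (h : IsNilpotent a) : IsNilClean a :=
  ⟨0, .zero, by rwa [sub_zero]⟩

theorem IsNilClean.map {F : Type*} [FunLike F R S] [RingHomClass F R S] (φ : F)
    (h : IsNilClean a) : IsNilClean (φ a) := by
  obtain ⟨e, he, hn⟩ := h
  exact ⟨φ e, he.map φ, by simpa only [map_sub] using hn.map φ⟩

theorem isNilCleanRing_iff : IsNilCleanRing R ↔ ∀ a : R, IsNilClean a := by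
  refine ⟨fun h a ↦ ?_, fun h a ↦ ?_⟩
  · obtain ⟨e, n, he, hn, rfl⟩ := h a
    exact ⟨e, he, by rwa [add_sub_cancel_left]⟩
  · obtain ⟨e, he, hn⟩ := h a
    exact ⟨e, a - e, he, hn, by abel⟩

end Ring

namespace Module.End

section Ring

variable {R M : Type*} [Ring R] [AddCommGroup M] [Module R M]

theorem isNilpotent_of_restrict_of_mapQ {n : End R M} {W : Submodule R M} (hW : W ≤ W.comap n)
    (hrestrict : IsNilpotent (n.restrict hW)) (hmapQ : IsNilpotent (W.mapQ W n hW)) :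
    IsNilpotent n := by
  obtain ⟨p, hp⟩ := hrestrict
  obtain ⟨q, hq⟩ := hmapQ
  refine ⟨p + q, LinearMap.ext fun x ↦ ?_⟩
  have hxW : (n ^ q) x ∈ W := by
    rw [← Submodule.Quotient.mk_eq_zero, ← mapQ_apply W (h := W.le_comap_pow_of_le_comap hW q),
      W.mapQ_pow hW q, hq, LinearMap.zero_apply]
  have := congr_arg Subtype.val (LinearMap.congr_fun hp ⟨_, hxW⟩)
  rw [pow_restrict] at this
  simpa [pow_add] using this

end Ring

section CommRing

variable {R M : Type*} [CommRing R] [AddCommGroup M] [Module R M] (n : End R M)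

theorem mem_maxGenEigenspace_zero_of_apply_mem {x : M} (h : n x ∈ n.maxGenEigenspace 0) :
    x ∈ n.maxGenEigenspace 0 := by
  obtain ⟨k, hk⟩ := (mem_maxGenEigenspace n 0 _).1 h
  refine (mem_maxGenEigenspace n 0 x).2 ⟨k + 1, ?_⟩
  simp only [zero_smul, sub_zero] at hk ⊢
  rwa [pow_succ, mul_apply]

theorem mem_maxGenEigenspace_zero_of_shift {β : ℕ → M} {a b : ℕ}
    (hshift : ∀ i, a ≤ i → i < b → n (β i) = β (i + 1)) (hb : β b ∈ n.maxGenEigenspace 0)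
    {i : ℕ} (hai : a ≤ i) (hib : i ≤ b) : β i ∈ n.maxGenEigenspace 0 := by
  induction hib using Nat.decreasingInduction with
  | self => exact hb
  | of_succ i hib ih =>
    exact mem_maxGenEigenspace_zero_of_apply_mem n (hshift i hai hib ▸ ih (by omega))

theorem isNilpotent_of_basis_mem_maxGenEigenspace_zero {ι : Type*} [Finite ι] (B : Basis ι R M)
    (h : ∀ i, B i ∈ n.maxGenEigenspace 0) : IsNilpotent n := by
  have : Module.Finite R M := .of_basis B
  have htop : n.maxGenEigenspace 0 = ⊤ :=
    eq_top_iff.2 (B.span_eq ▸ span_le.2 (range_subset_iff.2 h))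
  exact isNilpotent_iff_of_finite.2 fun x ↦ by
    simpa using (mem_maxGenEigenspace n 0 x).1 (htop ▸ mem_top)

end CommRing

section DivisionRing

variable {K V : Type*} [DivisionRing K] [AddCommGroup V] [Module K V]

theorem exists_isIdempotentElem_restrict_mapQ (W : Submodule K V) {eW : End K W}
    {eQ : End K (V ⧸ W)} (hW : IsIdempotentElem eW) (hQ : IsIdempotentElem eQ) :
    ∃ (e : End K V) (he : W ≤ W.comap e),
      IsIdempotentElem e ∧ e.restrict he = eW ∧ W.mapQ W e he = eQ := by
  obtain ⟨U, hU⟩ := W.exists_isCompl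
  let π := W.projectionOnto U hU
  let σ : V ⧸ W →ₗ[K] V := U.subtype ∘ₗ (W.quotientEquivOfIsCompl U hU).toLinearMap
  have hπW (x : W) : π x = x := projectionOnto_apply_left hU x
  have hπσ (y : V ⧸ W) : π (σ y) = 0 := projectionOnto_apply_of_mem_right hU (Subtype.prop _)
  have hmkW (x : W) : W.mkQ x = 0 := (Quotient.mk_eq_zero W).2 x.2
  have hmkσ (y : V ⧸ W) : W.mkQ (σ y) = y := mk_quotientEquivOfIsCompl_apply hU y
  let e : End K V := W.subtype ∘ₗ eW ∘ₗ π + σ ∘ₗ eQ ∘ₗ W.mkQ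
  have hπe (x : V) : π (e x) = eW (π x) := by
    simp only [e, LinearMap.add_apply, LinearMap.comp_apply, map_add, hπσ, add_zero]
    exact hπW _
  have hmke (x : V) : W.mkQ (e x) = eQ (W.mkQ x) := by
    simp only [e, LinearMap.add_apply, LinearMap.comp_apply, map_add, hmkσ]
    rw [subtype_apply, hmkW, zero_add]
  have heW (x : W) : e x = eW x := by
    simp only [e, LinearMap.add_apply, LinearMap.comp_apply, hπW, hmkW, map_zero, add_zero]
    rfl
  refine ⟨e, fun x hx ↦ ?_, ?_, ?_, ?_⟩
  · simp [heW ⟨x, hx⟩]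
  · refine LinearMap.ext fun x ↦ ?_
    change W.subtype (eW (π (e x))) + σ (eQ (W.mkQ (e x))) = e x
    rw [hπe, hmke, ← mul_apply eW, hW.eq, ← mul_apply eQ, hQ.eq]
    rfl
  · ext x
    simp [heW]
  · ext x
    exact hmke x

end DivisionRing

end Module.End

section DivisionRing

variable {K V : Type*} [DivisionRing K] [AddCommGroup V] [Module K V]

theorem IsNilClean.of_restrict_of_mapQ {f : Module.End K V} {W : Submodule K V} (hW : W ≤ W.comap f)
    (hrestrict : IsNilClean (f.restrict hW)) (hmapQ : IsNilClean (W.mapQ W f hW)) :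
    IsNilClean f := by
  obtain ⟨eW, heW, hnW⟩ := hrestrict
  obtain ⟨eQ, heQ, hnQ⟩ := hmapQ
  obtain ⟨e, hWe, he, rfl, rfl⟩ := Module.End.exists_isIdempotentElem_restrict_mapQ W heW heQ
  have hWfe : W ≤ W.comap (f - e) := fun x hx ↦ mem_comap.2 (sub_mem (hW hx) (hWe hx))
  refine ⟨e, he, Module.End.isNilpotent_of_restrict_of_mapQ hWfe ?_ ?_⟩
  · rwa [← LinearMap.restrict_sub hW hWe]
  · have hsub : W.mapQ W (f - e) hWfe = W.mapQ W f hW - W.mapQ W e hWe := by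
      ext x
      simp
    rwa [hsub]

theorem linearIndepOn_Iio_of_notMem_span {β : ℕ → V} {m : ℕ}
    (h : ∀ j < m, β j ∉ span K (β '' Iio j)) : LinearIndepOn K β (Iio m) := by
  induction m with
  | zero => simp
  | succ m ih =>
    rw [Iio_add_one_eq_Iic, ← Iio_insert, linearIndepOn_insert (s := Iio m) (by simp)]
    exact ⟨ih fun j hj ↦ h j (by omega), h m (by omega)⟩

theorem exists_linearIndepOn_Iio_mem_span [FiniteDimensional K V] (β : ℕ → V) :
    ∃ m, LinearIndepOn K β (Iio m) ∧ β m ∈ span K (β '' Iio m) := by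
  classical
  have hex : ∃ m, β m ∈ span K (β '' Iio m) := by
    by_contra! h
    have := (linearIndepOn_Iio_of_notMem_span (m := finrank K V + 1) fun j _ ↦ h j
      ).linearIndependent.fintype_card_le_finrank
    simp at this
  exact ⟨Nat.find hex, linearIndepOn_Iio_of_notMem_span fun j ↦ Nat.find_min hex,
    Nat.find_spec hex⟩

end DivisionRing

section Orbit

variable {R V : Type*} [Semiring R] [AddCommMonoid V] [Module R V] {f : Module.End R V} {v : V}

theorem span_image_Iio_orbit_eq_top (hv : span R (range fun i ↦ (f ^ i) v) = ⊤) {m : ℕ}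
    (hm : (f ^ m) v ∈ span R ((fun i ↦ (f ^ i) v) '' Iio m)) :
    span R ((fun i ↦ (f ^ i) v) '' Iio m) = ⊤ := by
  set S := span R ((fun i ↦ (f ^ i) v) '' Iio m)
  have hS : S ≤ S.comap f := span_le.2 <| by
    rintro _ ⟨i, hi, rfl⟩
    rw [SetLike.mem_coe, mem_comap, ← Module.End.mul_apply, ← pow_succ']
    rcases (show i + 1 ≤ m from hi).lt_or_eq with h | h
    · exact subset_span ⟨i + 1, h, rfl⟩
    · rwa [h]
  have horbit (i : ℕ) : (f ^ i) v ∈ S := by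
    rcases lt_or_ge i m with h | h
    · exact subset_span ⟨i, h, rfl⟩
    induction i, h using Nat.le_induction with
    | base => exact hm
    | succ i _ ih => rw [pow_succ', Module.End.mul_apply]; exact hS ih
  rw [eq_top_iff, ← hv, span_le]
  rintro _ ⟨i, rfl⟩
  exact horbit i

theorem isNilpotent_of_pow_apply_eq_zero (hv : span R (range fun i ↦ (f ^ i) v) = ⊤) {m : ℕ}
    (hm : (f ^ m) v = 0) : IsNilpotent f :=
  ⟨m, LinearMap.ext_on_range hv fun i ↦ by
    rw [← Module.End.mul_apply, ← pow_add, add_comm, pow_add, Module.End.mul_apply, hm, map_zero,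
      LinearMap.zero_apply]⟩

end Orbit

theorem eq_zero_or_exists_sub_mem_span_image_Iio {V : Type*} [AddCommGroup V] [Module (ZMod 2) V]
    (β : ℕ → V) {m : ℕ} {x : V} (hx : x ∈ span (ZMod 2) (β '' Iio m)) :
    x = 0 ∨ ∃ K < m, x - β K ∈ span (ZMod 2) (β '' Iio K) := by
  induction m generalizing x with
  | zero => simpa using hx
  | succ m ih =>
    rw [Iio_add_one_eq_Iic, ← Iio_insert, image_insert_eq, mem_span_insert] at hx
    obtain ⟨a, z, hz, rfl⟩ := hx
    obtain rfl | rfl : a = 0 ∨ a = 1 := by revert a; decide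
    · rcases ih hz with h | ⟨K, hK, hKz⟩
      · simp [h]
      · exact .inr ⟨K, by omega, by simpa using hKz⟩
    · exact .inr ⟨m, by omega, by simpa using hz⟩

section OrbitIdempotent

variable {R V : Type*} [CommRing R] [AddCommGroup V] [Module R V]

noncomputable def orbitIdempotent (f : End R V) (v : V) (K : ℕ) {L : ℕ}
    (B : Basis (Iio (L + 1)) R V) : End R V :=
  B.constr R fun i ↦ (if (i : ℕ) = K then (f ^ K) v else 0) +
    if (i : ℕ) = L then ∑ j ∈ Finset.Ico K (L + 1), (f ^ j) v - (f ^ (L + 1)) v else 0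

variable {f : End R V} {v : V} {K L : ℕ} {B : Basis (Iio (L + 1)) R V}

theorem orbitIdempotent_apply (hB : ∀ i, B i = (f ^ (i : ℕ)) v) {i : ℕ} (hi : i ≤ L) :
    orbitIdempotent f v K B ((f ^ i) v) = (if i = K then (f ^ K) v else 0) +
      if i = L then ∑ j ∈ Finset.Ico K (L + 1), (f ^ j) v - (f ^ (L + 1)) v else 0 := by
  rw [← hB ⟨i, Nat.lt_succ_of_le hi⟩, orbitIdempotent, B.constr_basis]

theorem orbitIdempotent_apply_sum (hKL : K ≤ L) (hB : ∀ i, B i = (f ^ (i : ℕ)) v) :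
    orbitIdempotent f v K B (∑ j ∈ Finset.Ico K (L + 1), (f ^ j) v) =
      (f ^ K) v + (∑ j ∈ Finset.Ico K (L + 1), (f ^ j) v - (f ^ (L + 1)) v) := by
  rw [map_sum, Finset.sum_congr rfl fun i hi ↦ orbitIdempotent_apply hB (i := i)
      (by simp at hi; omega), Finset.sum_add_distrib, Finset.sum_ite_eq', Finset.sum_ite_eq',
    if_pos (by simp; omega), if_pos (by simp; omega)]

theorem isIdempotentElem_orbitIdempotent (hKL : K ≤ L) (hB : ∀ i, B i = (f ^ (i : ℕ)) v)
    (hrel : (f ^ (L + 1)) v - (f ^ K) v ∈ span R ((fun i ↦ (f ^ i) v) '' Iio K)) :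
    IsIdempotentElem (orbitIdempotent f v K B) := by
  set β : ℕ → V := fun i ↦ (f ^ i) v
  set e := orbitIdempotent f v K B
  set u := ∑ j ∈ Finset.Ico K (L + 1), β j - β (L + 1)
  have he (i : ℕ) (hi : i ≤ L) :
      e (β i) = (if i = K then β K else 0) + if i = L then u else 0 :=
    orbitIdempotent_apply hB hi
  have hker : span R (β '' Iio K) ≤ LinearMap.ker e := span_le.2 <| by
    rintro _ ⟨i, hi, rfl⟩
    have hi : i < K := hi
    simp [he i (by omega), hi.ne, show i ≠ L by omega]
  have heK (hKL' : K ≠ L) : e (β K) = β K := by simp [he K hKL, hKL']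
  have heu : e u = β K + u - e (β K) := by
    rw [map_sub, orbitIdempotent_apply_sum hKL hB, ← sub_add_cancel (β (L + 1)) (β K), map_add,
      hker hrel, zero_add]
  refine B.ext fun ⟨i, hi⟩ ↦ ?_
  rw [hB, End.mul_apply, he i (Nat.le_of_lt_succ hi)]
  by_cases hiK : i = K <;> by_cases hiL : i = L
  · subst hiK hiL
    simp only [if_true, map_add, heu]
    abel
  · subst hiK
    simp [hiL, heK hiL]
  · subst hiL
    simp [hiK, heu, heK (Ne.symm hiK)]
  · simp [hiK, hiL]

theorem sub_orbitIdempotent_apply_sum [CharP R 2] (hKL : K ≤ L)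
    (hB : ∀ i, B i = (f ^ (i : ℕ)) v) :
    (f - orbitIdempotent f v K B) (∑ j ∈ Finset.Ico K (L + 1), (f ^ j) v) = 0 := by
  set β : ℕ → V := fun i ↦ (f ^ i) v
  set t := ∑ j ∈ Finset.Ico K (L + 1), β j
  have htwo (x : V) : x + x = 0 := by rw [← two_smul R, CharTwo.two_eq_zero, zero_smul]
  have hβ (i : ℕ) : f (β i) = β (i + 1) := by simp only [β, pow_succ', End.mul_apply]
  have ht : t = β K + ∑ i ∈ Finset.Ico (K + 1) (L + 1), β i :=
    Finset.sum_eq_sum_Ico_succ_bot (by omega) β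
  have hft : f t = t + β (L + 1) - β K := by
    rw [map_sum, Finset.sum_congr rfl fun i _ ↦ hβ i, Finset.sum_Ico_add',
      Finset.sum_Ico_succ_top (by omega), ht]
    abel
  rw [LinearMap.sub_apply, orbitIdempotent_apply_sum hKL hB, hft,
    show t + β (L + 1) - β K - (β K + (t - β (L + 1))) = (β (L + 1) + β (L + 1)) - (β K + β K)
      by abel, htwo, htwo, sub_zero]

theorem isNilpotent_sub_orbitIdempotent [CharP R 2] (hKL : K ≤ L)
    (hB : ∀ i, B i = (f ^ (i : ℕ)) v) : IsNilpotent (f - orbitIdempotent f v K B) := by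
  set β : ℕ → V := fun i ↦ (f ^ i) v
  set n := f - orbitIdempotent f v K B
  set t := ∑ j ∈ Finset.Ico K (L + 1), β j
  have hβ (i : ℕ) : f (β i) = β (i + 1) := by simp only [β, pow_succ', End.mul_apply]
  have he (i : ℕ) (hi : i ≤ L) : orbitIdempotent f v K B (β i) =
      (if i = K then β K else 0) + if i = L then t - β (L + 1) else 0 :=
    orbitIdempotent_apply hB hi
  have hnL (hKL' : K < L) : n (β L) = -t := by
    rw [LinearMap.sub_apply, hβ, he L le_rfl, if_neg hKL'.ne', if_pos rfl, zero_add,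
      show β (L + 1) - (t - β (L + 1)) = (β (L + 1) + β (L + 1)) - t by abel,
      ← two_smul R, CharTwo.two_eq_zero, zero_smul, zero_sub]
  have hshift (i : ℕ) (hiL : i < L) (hiK : i ≠ K) : n (β i) = β (i + 1) := by
    simp [n, hβ, he i hiL.le, hiK, hiL.ne]
  have htT : t ∈ n.maxGenEigenspace 0 := n.mem_maxGenEigenspace_zero_of_apply_mem <| by
    rw [sub_orbitIdempotent_apply_sum hKL hB]
    exact zero_mem _
  have hupper (i : ℕ) (hKi : K < i) (hiL : i ≤ L) : β i ∈ n.maxGenEigenspace 0 :=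
    n.mem_maxGenEigenspace_zero_of_shift (fun j _ hjL ↦ hshift j hjL (by omega))
      (n.mem_maxGenEigenspace_zero_of_apply_mem (hnL (by omega) ▸ neg_mem htT)) hKi hiL
  have hK : β K ∈ n.maxGenEigenspace 0 := by
    rw [eq_sub_of_add_eq (Finset.sum_eq_sum_Ico_succ_bot (by omega : K < L + 1) β).symm]
    exact sub_mem htT (sum_mem fun i hi ↦ hupper i (by simp at hi; omega) (by simp at hi; omega))
  refine n.isNilpotent_of_basis_mem_maxGenEigenspace_zero B fun ⟨i, hi⟩ ↦ ?_
  rw [hB]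
  rcases le_or_gt i K with hiK | hiK
  · exact n.mem_maxGenEigenspace_zero_of_shift (fun j _ hj ↦ hshift j (by omega) hj.ne) hK
      (Nat.zero_le i) hiK
  · exact hupper i hiK (Nat.le_of_lt_succ hi)

end OrbitIdempotent

theorem isNilClean_of_span_orbit_eq_top {V : Type*} [AddCommGroup V] [Module (ZMod 2) V]
    [FiniteDimensional (ZMod 2) V] {f : Module.End (ZMod 2) V} {v : V}
    (hv : span (ZMod 2) (range fun i ↦ (f ^ i) v) = ⊤) : IsNilClean f := by
  obtain ⟨m, hli, hm⟩ := exists_linearIndepOn_Iio_mem_span (K := ZMod 2) fun i ↦ (f ^ i) v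
  rcases eq_zero_or_exists_sub_mem_span_image_Iio _ hm with h0 | ⟨K, hK, hrel⟩
  · exact (isNilpotent_of_pow_apply_eq_zero hv h0).isNilClean
  obtain ⟨L, rfl⟩ : ∃ L, m = L + 1 := ⟨m - 1, by omega⟩
  let B := Basis.mk hli.linearIndependent <| by
    rw [← span_image_Iio_orbit_eq_top hv hm, image_eq_range]
  have hB (i : Iio (L + 1)) : B i = (f ^ (i : ℕ)) v := Basis.mk_apply _ _ i
  have hKL : K ≤ L := Nat.le_of_lt_succ hK
  exact ⟨orbitIdempotent f v K B, isIdempotentElem_orbitIdempotent hKL hB hrel,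
    isNilpotent_sub_orbitIdempotent hKL hB⟩

theorem Module.End.isNilClean {V : Type*} [AddCommGroup V] [Module (ZMod 2) V]
    [FiniteDimensional (ZMod 2) V] (f : End (ZMod 2) V) : IsNilClean f := by
  induction hd : finrank (ZMod 2) V using Nat.strong_induction_on generalizing V with
  | _ d ih =>
  rcases subsingleton_or_nontrivial V with _ | _
  · exact IsNilpotent.isNilClean ⟨1, Subsingleton.elim _ _⟩
  obtain ⟨v, hv⟩ := exists_ne (0 : V)
  set W := span (ZMod 2) (range fun i ↦ (f ^ i) v)
  by_cases hWtop : W = ⊤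
  · exact isNilClean_of_span_orbit_eq_top hWtop
  have hfW : W ≤ W.comap f := span_le.2 <| range_subset_iff.2 fun i ↦
    subset_span ⟨i + 1, by simp only [pow_succ', mul_apply]⟩
  have hWbot : 1 ≤ finrank (ZMod 2) W :=
    one_le_finrank_iff.2 fun h ↦ hv <| by
      simpa [W, h] using (subset_span ⟨0, rfl⟩ : (f ^ 0) v ∈ W)
  have := W.finrank_quotient_add_finrank
  refine IsNilClean.of_restrict_of_mapQ hfW (ih _ ?_ _ rfl) (ih _ ?_ _ rfl)
  · exact hd ▸ finrank_lt hWtop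
  · omega

theorem matrix_F2_nilClean_general (n : ℕ) :
    IsNilCleanRing (Matrix (Fin n) (Fin n) (ZMod 2)) :=
  isNilCleanRing_iff.2 fun A ↦ by
    simpa using (Module.End.isNilClean (Matrix.toLinAlgEquiv' A)).map Matrix.toLinAlgEquiv'.symm

theorem matrix_F2_nilClean (n : ℕ) (hn : 0 < n) :
    IsNilCleanRing (Matrix (Fin n) (Fin n) (ZMod 2)) :=
  matrix_F2_nilClean_general n
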